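/- For the cooperative communication matrix C with 0 < η ≤ (N−1)/N strict, the iterates C^k x converge to the consensus vector x̄·(1,…,1) as k → ∞, for every x ∈ ℝ^N. -/

import Mathlib

/-!
Writing `C = (1 - η - η/(N-1)) • 1 + η/(N-1) • J` with `J` the all-ones matrix, `C` fixes every
constant vector (its rows sum to one) and scales every vector of mean zero by
`λ = 1 - η N / (N - 1)`. Hence `C ^ k x = x̄ + λ ^ k (x - x̄)`, and `0 ≤ λ < 1` under the hypotheses
on `η`.
-/

open Matrix Filter Topology

theorem card_mul_mean_eq_sum {ι : Type*} [Fintype ι] (x : ι → ℝ) :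
    (Fintype.card ι : ℝ) * (1 / (Fintype.card ι : ℝ) * ∑ i, x i) = ∑ i, x i := by
  rcases isEmpty_or_nonempty ι with _ | _
  · simp
  · field_simp

section

variable {ι : Type*} [Fintype ι] [DecidableEq ι]

theorem Matrix.mulVec_eq_of_diag_offDiag {M : Matrix ι ι ℝ} {d o : ℝ}
    (hM : ∀ i j, M i j = if i = j then d else o) (z : ι → ℝ) :
    M *ᵥ z = fun i => (d - o) * z i + o * ∑ j, z j := by
  funext i
  have hsplit : ∀ j, M i j * z j = o * z j + if i = j then (d - o) * z j else 0 := by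
    intro j
    by_cases h : i = j
    · subst h; simp only [hM, if_true]; ring
    · simp [hM, h]
  simp only [mulVec, dotProduct, hsplit, Finset.sum_add_distrib, Finset.sum_ite_eq,
    Finset.mem_univ, if_true, ← Finset.mul_sum]
  ring

theorem pow_mulVec_eq_mean_add_of_mulVec_eq {M : Matrix ι ι ℝ} {a b : ℝ}
    (hM : ∀ z, M *ᵥ z = fun i => a * z i + b * ∑ j, z j)
    (hab : a + b * Fintype.card ι = 1) (x : ι → ℝ) (k : ℕ) :
    (M ^ k) *ᵥ x = fun i => a ^ k * (x i - 1 / (Fintype.card ι : ℝ) * ∑ j, x j) +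
      1 / (Fintype.card ι : ℝ) * ∑ j, x j := by
  set m := 1 / (Fintype.card ι : ℝ) * ∑ j, x j
  have hm : (Fintype.card ι : ℝ) * m = ∑ j, x j := card_mul_mean_eq_sum x
  induction k with
  | zero => funext i; simp
  | succ k ih =>
    have hsum : ∑ j, (a ^ k * (x j - m) + m) = Fintype.card ι * m := by
      simp only [Finset.sum_add_distrib, ← Finset.mul_sum, Finset.sum_sub_distrib,
        Finset.sum_const, Finset.card_univ, nsmul_eq_mul, ← hm]
      ring
    rw [pow_succ', ← mulVec_mulVec, ih, hM]
    funext i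
    rw [hsum]
    linear_combination m * hab

theorem tendsto_pow_mulVec_mean_of_mulVec_eq {M : Matrix ι ι ℝ} {a b : ℝ}
    (hM : ∀ z, M *ᵥ z = fun i => a * z i + b * ∑ j, z j)
    (hab : a + b * Fintype.card ι = 1) (ha : |a| < 1) (x : ι → ℝ) :
    Tendsto (fun k : ℕ => (M ^ k) *ᵥ x) atTop
      (𝓝 fun _ => 1 / (Fintype.card ι : ℝ) * ∑ j, x j) := by
  simp only [pow_mulVec_eq_mean_add_of_mulVec_eq hM hab, tendsto_pi_nhds]
  intro i
  simpa using ((tendsto_pow_atTop_nhds_zero_of_abs_lt_one ha).mul_const _).add_const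
    (1 / (Fintype.card ι : ℝ) * ∑ j, x j)

end

theorem coop_convergence_to_consensus (N : ℕ) (hN : 2 ≤ N) (η : ℝ)
    (hη0 : 0 < η) (hη1 : η ≤ ((N : ℝ) - 1) / N)
    (C : Matrix (Fin N) (Fin N) ℝ)
    (hC : ∀ i j, C i j = if i = j then 1 - η else η / ((N : ℝ) - 1))
    (x : Fin N → ℝ) :
    Filter.Tendsto (fun k : ℕ => (C ^ k).mulVec x) Filter.atTop
      (nhds (fun _ => (1 / (N : ℝ)) * ∑ i, x i)) := by
  have hN1 : (1 : ℝ) < N := by exact_mod_cast hN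
  have hN_sub_pos : (0 : ℝ) < N - 1 := by linarith
  set a := 1 - η - η / ((N : ℝ) - 1)
  have hrows : a + η / ((N : ℝ) - 1) * Fintype.card (Fin N) = 1 := by
    simp only [a, Fintype.card_fin]
    field_simp
    ring
  have ha : |a| < 1 := by
    have hηN : η * N ≤ N - 1 := by rwa [le_div_iff₀ (by linarith)] at hη1
    have hpos : 0 < η / ((N : ℝ) - 1) := by positivity
    have hle : η + η / ((N : ℝ) - 1) ≤ 1 := by
      rw [← sub_nonneg]
      have : 1 - (η + η / ((N : ℝ) - 1)) = (N - 1 - η * N) / (N - 1) := by field_simp; ring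
      rw [this]
      exact div_nonneg (by linarith) hN_sub_pos.le
    rw [abs_lt]
    constructor <;> linarith
  simpa using tendsto_pow_mulVec_mean_of_mulVec_eq
    (Matrix.mulVec_eq_of_diag_offDiag hC) hrows ha x
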